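/- arXiv:2005.12900 — 3 statements merged into one kernel-verified Lean document; each statement's English description precedes it below -/
import Mathlib

section
/- Let P be a row-stochastic n×n matrix, γ ∈ (0,1), and define for a vector V ∈ ℝⁿ the variance vector Var_P(V) := P(V∘V) − (PV)∘(PV), where ∘ denotes entrywise product. If V = (I − γP)^{-1} r for some vector r ≥ 0, then Var_P(V) ≤ γ^{-2}(γ²P − I)(V∘V) + 2γ^{-2} V∘r entrywise. -/
open Matrix

/-- Variance bound: `Var_P(V) ≤ γ⁻²(γ²P − I)(V∘V) + 2γ⁻² V∘r` entrywise,
for `V = (I − γP)⁻¹ r` with `r ≥ 0`. -/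
theorem stmt8 (n : ℕ) (P : Matrix (Fin n) (Fin n) ℝ)
    (hP0 : ∀ i j, 0 ≤ P i j) (hP1 : ∀ i, ∑ j, P i j = 1)
    (γ : ℝ) (hγ0 : 0 < γ) (hγ1 : γ < 1)
    (r : Fin n → ℝ) (hr : ∀ i, 0 ≤ r i)
    (V : Fin n → ℝ) (hV : V = (1 - γ • P)⁻¹.mulVec r)
    (VarP : Fin n → ℝ)
    (hVar : ∀ i, VarP i = P.mulVec (fun j => V j * V j) i - (P.mulVec V i) * (P.mulVec V i)) :
    ∀ i, VarP i ≤ γ⁻¹ ^ 2 * ((γ ^ 2 • P - 1).mulVec (fun j => V j * V j) i)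
      + 2 * γ⁻¹ ^ 2 * (V i * r i) := by
  intro i
  by_cases hdet : IsUnit (1 - γ • P).det
  · -- invertible case: (1 - γP) V = r
    have hAV : (1 - γ • P).mulVec V = r := by
      rw [hV, Matrix.mulVec_mulVec, Matrix.mul_nonsing_inv _ hdet, Matrix.one_mulVec]
    have hkey : V i - γ * P.mulVec V i = r i := by
      have := congrFun hAV i
      rwa [Matrix.sub_mulVec, Matrix.one_mulVec, Matrix.smul_mulVec] at this
    have hRHS : (γ ^ 2 • P - 1).mulVec (fun j => V j * V j) i
        = γ ^ 2 * P.mulVec (fun j => V j * V j) i - V i * V i := by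
      rw [Matrix.sub_mulVec, Matrix.one_mulVec, Matrix.smul_mulVec]
      simp [smul_eq_mul]
    rw [hVar i, hRHS]
    have hγ2 : γ⁻¹ ^ 2 * γ ^ 2 = 1 := by
      field_simp
    have hinv : γ⁻¹ * γ = 1 := inv_mul_cancel₀ hγ0.ne'
    have hW : (P.mulVec V) i = γ⁻¹ * (V i - r i) := by
      field_simp
      linarith [hkey]
    rw [hW]
    have hM : γ⁻¹ ^ 2 * (γ ^ 2 * (P.mulVec (fun j => V j * V j)) i)
        = (P.mulVec (fun j => V j * V j)) i := by
      rw [← mul_assoc, hγ2, one_mul]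
    nlinarith [hM, sq_nonneg (γ⁻¹ * r i)]
  · -- non-invertible: inverse is 0, so V = 0
    have hV0 : V = 0 := by
      rw [hV, Matrix.nonsing_inv_apply_not_isUnit _ hdet]
      simp [Matrix.mulVec]
    subst hV0
    simp only [Pi.zero_apply, mul_zero, zero_mul, sub_zero, mul_zero]
    rw [hVar i]
    simp [Matrix.mulVec]
end

section
/- Let P be a row-stochastic n×n matrix, γ ∈ (0,1), r ∈ ℝⁿ with r ≥ 0, and V := (I − γP)^{-1} r. Then ‖(I − γP)^{-1} √(Var_P(V))‖_∞ ≤ (4/(γ√(1−γ))) ‖V‖_∞, where √ is applied entrywise and Var_P(V) := P(V∘V) − (PV)∘(PV). -/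
/-!
Writing `r = V - γ P V` gives the variance identity
`γ² Var_P V = r ∘ (2V - r) - (I - γ² P)(V ∘ V)`. Summed along `T` steps of the chain it
telescopes, so `γ² ∑_{s<T} γ^{2s} P^s Var_P V ≤ 2 ‖V‖²`. Jensen's inequality for `√` and
Cauchy–Schwarz over `s` turn this into `∑_{s<T} γ^s P^s √(Var_P V) ≤ √(2T) ‖V‖ / γ`. For
`T ≈ 1/(1-γ)` we have `γ^T ≤ 1/2`, and since `(I - γ^T P^T)(I - γP)⁻¹ = ∑_{s<T} (γP)^s`,
the maximum principle for `I - γ^T P^T` shows that the full resolvent at most doubles the bound.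
-/

open Matrix Finset

namespace Matrix

variable {ι : Type*} [Fintype ι] [DecidableEq ι] {P : Matrix ι ι ℝ}

def rowVariance (P : Matrix ι ι ℝ) (v : ι → ℝ) : ι → ℝ :=
  P *ᵥ (v * v) - (P *ᵥ v) * (P *ᵥ v)

lemma one_sub_smul_mulVec_apply (β : ℝ) (x : ι → ℝ) (i : ι) :
    ((1 - β • P) *ᵥ x) i = x i - β * (P *ᵥ x) i := by
  simp [sub_mulVec, smul_mulVec]

lemma mulVec_const_of_mem_rowStochastic (hP : P ∈ rowStochastic ℝ ι) (c : ℝ) :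
    (P *ᵥ fun _ => c) = fun _ => c := by
  have hc : (fun _ => c : ι → ℝ) = c • 1 := by ext; simp
  rw [hc, mulVec_smul, one_vecMul_of_mem_rowStochastic hP]

lemma mulVec_apply_le_of_le (hP : P ∈ rowStochastic ℝ ι) {w : ι → ℝ} {c : ℝ}
    (hw : ∀ j, w j ≤ c) (i : ι) : (P *ᵥ w) i ≤ c :=
  calc (P *ᵥ w) i = ∑ j, P i j * w j := rfl
    _ ≤ ∑ j, P i j * c := sum_le_sum fun j _ => mul_le_mul_of_nonneg_left (hw j) (hP.1 i j)
    _ = c := by rw [← sum_mul, sum_row_of_mem_rowStochastic hP, one_mul]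

lemma le_mulVec_apply_of_le (hP : P ∈ rowStochastic ℝ ι) {w : ι → ℝ} {c : ℝ}
    (hw : ∀ j, c ≤ w j) (i : ι) : c ≤ (P *ᵥ w) i := by
  simpa [mulVec_neg] using mulVec_apply_le_of_le hP (w := -w) (fun j => neg_le_neg (hw j)) i

lemma rowVariance_nonneg (hP : P ∈ rowStochastic ℝ ι) (v : ι → ℝ) (i : ι) :
    0 ≤ rowVariance P v i := by
  have hJensen := (even_two.convexOn_pow (𝕜 := ℝ)).map_sum_le (t := univ) (w := P i) (p := v)
    (fun j _ => hP.1 i j) (sum_row_of_mem_rowStochastic hP i) (fun j _ => Set.mem_univ _)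
  simp only [rowVariance, Pi.sub_apply, Pi.mul_apply, sub_nonneg, mulVec, dotProduct]
  simpa [sq] using hJensen

lemma mulVec_sqrt_le_sqrt_mulVec (hP : P ∈ rowStochastic ℝ ι) {w : ι → ℝ}
    (hw : ∀ j, 0 ≤ w j) (i : ι) : (P *ᵥ fun j => √(w j)) i ≤ √((P *ᵥ w) i) :=
  Real.strictConcaveOn_sqrt.concaveOn.le_map_sum (fun j _ => hP.1 i j)
    (sum_row_of_mem_rowStochastic hP i) (fun j _ => hw j)

lemma nonneg_of_one_sub_smul_mulVec_nonneg (hP : P ∈ rowStochastic ℝ ι) {β : ℝ}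
    (hβ0 : 0 ≤ β) (hβ1 : β < 1) {x : ι → ℝ} (hx : ∀ i, 0 ≤ ((1 - β • P) *ᵥ x) i) (i : ι) :
    0 ≤ x i := by
  have : Nonempty ι := ⟨i⟩
  obtain ⟨k, hk⟩ := Finite.exists_min x
  have hPx : x k ≤ (P *ᵥ x) k := le_mulVec_apply_of_le hP hk k
  have hxk := hx k
  rw [one_sub_smul_mulVec_apply] at hxk
  nlinarith [hk i]

lemma le_div_of_one_sub_smul_mulVec_le (hP : P ∈ rowStochastic ℝ ι) {β : ℝ}
    (hβ0 : 0 ≤ β) (hβ1 : β < 1) {x : ι → ℝ} {d : ℝ} (hx : ∀ i, ((1 - β • P) *ᵥ x) i ≤ d)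
    (i : ι) : x i ≤ d / (1 - β) := by
  have hconst : ((1 - β • P) *ᵥ fun _ => d / (1 - β)) = fun _ => d := by
    ext j
    rw [one_sub_smul_mulVec_apply, mulVec_const_of_mem_rowStochastic hP]
    field_simp [(sub_pos.2 hβ1).ne']
  have := nonneg_of_one_sub_smul_mulVec_nonneg hP hβ0 hβ1
    (x := (fun _ => d / (1 - β)) - x) (fun j => by simpa [mulVec_sub, hconst] using hx j) i
  simpa using this

lemma isUnit_det_one_sub_smul (hP : P ∈ rowStochastic ℝ ι) {β : ℝ} (hβ0 : 0 ≤ β)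
    (hβ1 : β < 1) : IsUnit (1 - β • P).det := by
  have hle (x y : ι → ℝ) (hxy : (1 - β • P) *ᵥ x = (1 - β • P) *ᵥ y) (i : ι) : x i ≤ y i :=
    sub_nonneg.1 <| nonneg_of_one_sub_smul_mulVec_nonneg hP hβ0 hβ1 (x := y - x)
      (fun j => by simp [mulVec_sub, hxy]) i
  exact (isUnit_iff_isUnit_det _).1 <| mulVec_injective_iff_isUnit.1 fun x y hxy =>
    funext fun i => (hle x y hxy i).antisymm (hle y x hxy.symm i)

lemma geom_sum_smul_mulVec_apply (P : Matrix ι ι ℝ) (β : ℝ) (T : ℕ) (v : ι → ℝ) (i : ι) :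
    ((∑ s ∈ range T, (β • P) ^ s) *ᵥ v) i = ∑ s ∈ range T, β ^ s * (P ^ s *ᵥ v) i := by
  simp [sum_mulVec, smul_pow, smul_mulVec]

lemma geom_sum_mulVec_sqrt_le (hP : P ∈ rowStochastic ℝ ι) {γ : ℝ} (hγ : 0 ≤ γ) (T : ℕ)
    {w : ι → ℝ} (hw : ∀ j, 0 ≤ w j) (i : ι) :
    ((∑ s ∈ range T, (γ • P) ^ s) *ᵥ fun j => √(w j)) i
      ≤ √(T * ((∑ s ∈ range T, (γ ^ 2 • P) ^ s) *ᵥ w) i) := by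
  have hPw (s : ℕ) : 0 ≤ (P ^ s *ᵥ w) i :=
    nonneg_mulVec_of_mem_rowStochastic (pow_mem hP s) hw i
  rw [geom_sum_smul_mulVec_apply, geom_sum_smul_mulVec_apply]
  calc ∑ s ∈ range T, γ ^ s * (P ^ s *ᵥ fun j => √(w j)) i
      ≤ ∑ s ∈ range T, √((γ ^ 2) ^ s * (P ^ s *ᵥ w) i) := by
        refine sum_le_sum fun s _ => ?_
        rw [Real.sqrt_mul (by positivity), ← pow_mul, mul_comm 2, pow_mul,
          Real.sqrt_sq (by positivity)]
        exact mul_le_mul_of_nonneg_left (mulVec_sqrt_le_sqrt_mulVec (pow_mem hP s) hw i)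
          (by positivity)
    _ ≤ √(T * ∑ s ∈ range T, (γ ^ 2) ^ s * (P ^ s *ᵥ w) i) := by
        refine Real.le_sqrt_of_sq_le ((sq_sum_le_card_mul_sum_sq).trans_eq ?_)
        simp [Real.sq_sqrt (mul_nonneg (pow_nonneg (sq_nonneg γ) _) (hPw _))]

lemma geom_sum_smul_mulVec_mono (hP : P ∈ rowStochastic ℝ ι) {β : ℝ} (hβ : 0 ≤ β) (T : ℕ)
    {u v : ι → ℝ} (huv : ∀ j, u j ≤ v j) (i : ι) :
    ((∑ s ∈ range T, (β • P) ^ s) *ᵥ u) i ≤ ((∑ s ∈ range T, (β • P) ^ s) *ᵥ v) i := by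
  rw [geom_sum_smul_mulVec_apply, geom_sum_smul_mulVec_apply]
  refine sum_le_sum fun s _ => mul_le_mul_of_nonneg_left ?_ (pow_nonneg hβ s)
  have := nonneg_mulVec_of_mem_rowStochastic (pow_mem hP s) (x := v - u)
    (fun j => sub_nonneg.2 (huv j)) i
  rwa [mulVec_sub, Pi.sub_apply, sub_nonneg] at this

lemma geom_sum_sq_smul_mulVec_le (hP : P ∈ rowStochastic ℝ ι) {γ : ℝ} (hγ0 : 0 ≤ γ)
    (hγ1 : γ ≤ 1) (T : ℕ) {r : ι → ℝ} (hr : ∀ j, 0 ≤ r j) (i : ι) :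
    ((∑ s ∈ range T, (γ ^ 2 • P) ^ s) *ᵥ r) i ≤ ((∑ s ∈ range T, (γ • P) ^ s) *ᵥ r) i := by
  rw [geom_sum_smul_mulVec_apply, geom_sum_smul_mulVec_apply]
  refine sum_le_sum fun s _ => mul_le_mul_of_nonneg_right ?_
    (nonneg_mulVec_of_mem_rowStochastic (pow_mem hP s) hr i)
  rw [← pow_mul]
  exact pow_le_pow_of_le_one hγ0 hγ1 (by omega)

lemma geom_sum_mulVec_le_of_one_sub_smul_mulVec_eq (hP : P ∈ rowStochastic ℝ ι) {γ : ℝ}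
    (hγ : 0 ≤ γ) (T : ℕ) {V r : ι → ℝ} (hV : ∀ j, 0 ≤ V j) (hVr : (1 - γ • P) *ᵥ V = r)
    (i : ι) : ((∑ s ∈ range T, (γ • P) ^ s) *ᵥ r) i ≤ V i := by
  rw [← hVr, mulVec_mulVec, geom_sum_mul_neg, smul_pow, one_sub_smul_mulVec_apply,
    sub_le_self_iff]
  exact mul_nonneg (pow_nonneg hγ T) (nonneg_mulVec_of_mem_rowStochastic (pow_mem hP T) hV i)

lemma sq_smul_rowVariance_eq {γ : ℝ} {V r : ι → ℝ} (hVr : (1 - γ • P) *ᵥ V = r) :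
    γ ^ 2 • rowVariance P V = r * (2 • V - r) - (1 - γ ^ 2 • P) *ᵥ (V * V) := by
  ext i
  have h := congrFun hVr i
  rw [one_sub_smul_mulVec_apply] at h
  simp only [rowVariance, one_sub_smul_mulVec_apply, Pi.smul_apply, Pi.sub_apply, Pi.mul_apply,
    smul_eq_mul]
  linear_combination (V i + γ * (P *ᵥ V) i - r i) * h

lemma sq_mul_geom_sum_mulVec_rowVariance_le (hP : P ∈ rowStochastic ℝ ι) {γ : ℝ}
    (hγ0 : 0 ≤ γ) (hγ1 : γ ≤ 1) {V r : ι → ℝ} (hr : ∀ j, 0 ≤ r j) (hV : ∀ j, 0 ≤ V j)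
    (hVr : (1 - γ • P) *ᵥ V = r) (T : ℕ) (i : ι) :
    γ ^ 2 * ((∑ s ∈ range T, (γ ^ 2 • P) ^ s) *ᵥ rowVariance P V) i ≤ 2 * ‖V‖ ^ 2 := by
  set G := ∑ s ∈ range T, (γ ^ 2 • P) ^ s
  have hVB (j : ι) : V j ≤ ‖V‖ := (Real.le_norm_self _).trans (norm_le_pi_norm V j)
  have hsplit : γ ^ 2 * (G *ᵥ rowVariance P V) i
      = (G *ᵥ (r * (2 • V - r))) i - V i * V i + ((γ ^ 2 • P) ^ T *ᵥ (V * V)) i := by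
    rw [← smul_eq_mul, ← Pi.smul_apply, ← mulVec_smul, sq_smul_rowVariance_eq hVr, mulVec_sub,
      mulVec_mulVec, geom_sum_mul_neg, sub_mulVec, one_mulVec]
    simp only [Pi.sub_apply, Pi.mul_apply]
    ring
  have hgain : (G *ᵥ (r * (2 • V - r))) i ≤ 2 * ‖V‖ * V i := by
    calc (G *ᵥ (r * (2 • V - r))) i ≤ (G *ᵥ ((2 * ‖V‖) • r)) i :=
          geom_sum_smul_mulVec_mono hP (sq_nonneg γ) T (fun j => by
            simp only [Pi.mul_apply, Pi.sub_apply, Pi.smul_apply, Pi.add_apply, smul_eq_mul,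
              two_smul]
            nlinarith [hr j, hVB j]) i
      _ = 2 * ‖V‖ * (G *ᵥ r) i := by rw [mulVec_smul, Pi.smul_apply, smul_eq_mul]
      _ ≤ 2 * ‖V‖ * V i := mul_le_mul_of_nonneg_left
          ((geom_sum_sq_smul_mulVec_le hP hγ0 hγ1 T hr i).trans
            (geom_sum_mulVec_le_of_one_sub_smul_mulVec_eq hP hγ0 T hV hVr i)) (by positivity)
  have htail : ((γ ^ 2 • P) ^ T *ᵥ (V * V)) i ≤ ‖V‖ ^ 2 := by
    rw [smul_pow, smul_mulVec, Pi.smul_apply, smul_eq_mul]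
    refine (mul_le_of_le_one_left
      (nonneg_mulVec_of_mem_rowStochastic (pow_mem hP T) (fun j => mul_self_nonneg (V j)) i)
      (pow_le_one₀ (sq_nonneg γ) (pow_le_one₀ hγ0 hγ1))).trans
      (mulVec_apply_le_of_le (pow_mem hP T) (fun j => ?_) i)
    exact (mul_self_le_mul_self (hV j) (hVB j)).trans_eq (sq _).symm
  nlinarith [sq_nonneg (‖V‖ - V i)]

lemma norm_inv_one_sub_smul_mulVec_le (hP : P ∈ rowStochastic ℝ ι) {γ : ℝ} (hγ : 0 ≤ γ)
    {T : ℕ} (hγT : γ ^ T < 1) {y : ι → ℝ} (hy : ∀ j, 0 ≤ y j) {c : ℝ} (hc0 : 0 ≤ c)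
    (hc : ∀ i, ((∑ s ∈ range T, (γ • P) ^ s) *ᵥ y) i ≤ c) :
    ‖(1 - γ • P)⁻¹ *ᵥ y‖ ≤ c / (1 - γ ^ T) := by
  have hγ1 : γ < 1 := lt_of_pow_lt_pow_left₀ T zero_le_one (by rwa [one_pow])
  have hPT := pow_mem hP T
  have hγT0 : 0 ≤ γ ^ T := pow_nonneg hγ T
  set x := (1 - γ • P)⁻¹ *ᵥ y
  have hAx : (1 - γ • P) *ᵥ x = y := by
    rw [mulVec_mulVec, mul_nonsing_inv _ (isUnit_det_one_sub_smul hP hγ hγ1), one_mulVec]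
  have hx : (1 - γ ^ T • P ^ T) *ᵥ x = (∑ s ∈ range T, (γ • P) ^ s) *ᵥ y := by
    rw [← smul_pow, ← geom_sum_mul_neg, ← mulVec_mulVec, hAx]
  have hx0 : ∀ i, 0 ≤ x i := nonneg_of_one_sub_smul_mulVec_nonneg hPT hγT0 hγT fun i => by
    simpa [hx] using geom_sum_smul_mulVec_mono hP hγ T (u := 0) hy i
  refine (pi_norm_le_iff_of_nonneg (div_nonneg hc0 (sub_pos.2 hγT).le)).2 fun i => ?_
  rw [Real.norm_eq_abs, abs_of_nonneg (hx0 i)]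
  exact le_div_of_one_sub_smul_mulVec_le hPT hγT0 hγT (hx ▸ hc) i

end Matrix

open Real in
lemma exists_pow_le_half_and_le_two_div {γ : ℝ} (hγ0 : 0 ≤ γ) (hγ1 : γ < 1) :
    ∃ T : ℕ, γ ^ T ≤ 1 / 2 ∧ (T : ℝ) ≤ 2 / (1 - γ) := by
  have h1γ : 0 < 1 - γ := sub_pos.2 hγ1
  have hT : (1 - γ)⁻¹ ≤ ⌈(1 - γ)⁻¹⌉₊ := Nat.le_ceil _
  refine ⟨⌈(1 - γ)⁻¹⌉₊, ?_, ?_⟩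
  · have hT' : 1 ≤ ⌈(1 - γ)⁻¹⌉₊ * (1 - γ) := by rwa [← inv_le_iff_one_le_mul₀ h1γ]
    calc γ ^ ⌈(1 - γ)⁻¹⌉₊ ≤ exp (γ - 1) ^ ⌈(1 - γ)⁻¹⌉₊ :=
          pow_le_pow_left₀ hγ0 (by linarith [add_one_le_exp (γ - 1)]) _
      _ = exp (-(⌈(1 - γ)⁻¹⌉₊ * (1 - γ))) := by rw [← exp_nat_mul]; ring_nf
      _ ≤ exp (-1) := exp_le_exp.2 (by linarith)
      _ ≤ 1 / 2 := exp_neg_one_lt_half.le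
  · have h1 : 1 ≤ (1 - γ)⁻¹ := one_le_inv₀ h1γ |>.2 (by linarith)
    calc (⌈(1 - γ)⁻¹⌉₊ : ℝ) ≤ (1 - γ)⁻¹ + 1 := (Nat.ceil_lt_add_one (by positivity)).le
      _ ≤ 2 / (1 - γ) := by rw [div_eq_mul_inv]; linarith

/-- `‖(I − γP)⁻¹ √(Var_P(V))‖_∞ ≤ (4/(γ√(1−γ))) ‖V‖_∞` for `V = (I − γP)⁻¹ r`, `r ≥ 0`. -/
theorem stmt9 (n : ℕ) (P : Matrix (Fin n) (Fin n) ℝ)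
    (hP0 : ∀ i j, 0 ≤ P i j) (hP1 : ∀ i, ∑ j, P i j = 1)
    (γ : ℝ) (hγ0 : 0 < γ) (hγ1 : γ < 1)
    (r : Fin n → ℝ) (hr : ∀ i, 0 ≤ r i)
    (V : Fin n → ℝ) (hV : V = (1 - γ • P)⁻¹.mulVec r)
    (VarP : Fin n → ℝ)
    (hVar : ∀ i, VarP i = P.mulVec (fun j => V j * V j) i - (P.mulVec V i) * (P.mulVec V i)) :
    ‖(1 - γ • P)⁻¹.mulVec (fun i => Real.sqrt (VarP i))‖
      ≤ 4 / (γ * Real.sqrt (1 - γ)) * ‖V‖ := by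
  have hP : P ∈ rowStochastic ℝ (Fin n) := mem_rowStochastic_iff_sum.2 ⟨hP0, hP1⟩
  have hVr : (1 - γ • P) *ᵥ V = r := by
    rw [hV, mulVec_mulVec, mul_nonsing_inv _ (isUnit_det_one_sub_smul hP hγ0.le hγ1), one_mulVec]
  have hV0 := nonneg_of_one_sub_smul_mulVec_nonneg hP hγ0.le hγ1 (hVr ▸ hr)
  have hVarP : VarP = rowVariance P V := funext hVar
  have h1γ : 0 < 1 - γ := sub_pos.2 hγ1
  obtain ⟨T, hγT, hT⟩ := exists_pow_le_half_and_le_two_div hγ0.le hγ1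
  set c := 2 * ‖V‖ / (γ * √(1 - γ))
  have hc0 : 0 ≤ c := by positivity
  have hc (i : Fin n) : ((∑ s ∈ range T, (γ • P) ^ s) *ᵥ fun j => √(VarP j)) i ≤ c := by
    refine (geom_sum_mulVec_sqrt_le hP hγ0.le T (hVarP ▸ rowVariance_nonneg hP V) i).trans ?_
    have hg := sq_mul_geom_sum_mulVec_rowVariance_le hP hγ0.le hγ1.le hr hV0 hVr T i
    rw [← hVarP] at hg
    rw [Real.sqrt_le_left hc0]
    calc (T : ℝ) * ((∑ s ∈ range T, (γ ^ 2 • P) ^ s) *ᵥ VarP) i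
        ≤ T * (2 * ‖V‖ ^ 2 / γ ^ 2) := mul_le_mul_of_nonneg_left
          (by rw [le_div_iff₀ (by positivity)]; linarith) (Nat.cast_nonneg T)
      _ ≤ 2 / (1 - γ) * (2 * ‖V‖ ^ 2 / γ ^ 2) := mul_le_mul_of_nonneg_right hT (by positivity)
      _ = c ^ 2 := by rw [div_pow, mul_pow, mul_pow, Real.sq_sqrt h1γ.le]; field_simp
  calc ‖(1 - γ • P)⁻¹ *ᵥ fun i => √(VarP i)‖ ≤ c / (1 - γ ^ T) :=
        norm_inv_one_sub_smul_mulVec_le hP hγ0.le (by linarith) (fun _ => Real.sqrt_nonneg _)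
          hc0 hc
    _ ≤ 2 * c := by rw [div_le_iff₀ (by linarith)]; nlinarith
    _ = 4 / (γ * √(1 - γ)) * ‖V‖ := by ring
end

section
/- Let P be row-stochastic, γ ∈ (0,1), and V ∈ ℝⁿ with Var_P(V) := P(V∘V) − (PV)∘(PV) ≥ 0. Then ‖(I − γP)^{-1} √(Var_P(V))‖_∞ ≤ (1/√(1−γ)) · √(‖(I − γP)^{-1} Var_P(V)‖_∞); that is, since each row of (1−γ)(I−γP)^{-1} is a probability distribution, Jensen's inequality gives ((I−γP)^{-1}√v)_i ≤ (1/√(1−γ)) √(((I−γP)^{-1} v)_i) for any nonnegative vector v. -/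
open Matrix

attribute [local instance] Matrix.linftyOpNormedRing Matrix.linftyOpNormedAlgebra

/-- Jensen-type bound: `‖(I−γP)⁻¹ √(Var_P(V))‖_∞ ≤ (1/√(1−γ)) √(‖(I−γP)⁻¹ Var_P(V)‖_∞)`,
together with the rowwise Jensen inequality for any nonnegative vector `v`. -/
theorem stmt10 (n : ℕ) (P : Matrix (Fin n) (Fin n) ℝ)
    (hP0 : ∀ i j, 0 ≤ P i j) (hP1 : ∀ i, ∑ j, P i j = 1)
    (γ : ℝ) (hγ0 : 0 < γ) (hγ1 : γ < 1)
    (V : Fin n → ℝ) (VarP : Fin n → ℝ)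
    (hVar : ∀ i, VarP i = P.mulVec (fun j => V j * V j) i - (P.mulVec V i) * (P.mulVec V i))
    (hVarNonneg : ∀ i, 0 ≤ VarP i) :
    (‖(1 - γ • P)⁻¹.mulVec (fun i => Real.sqrt (VarP i))‖
      ≤ (1 / Real.sqrt (1 - γ)) * Real.sqrt ‖(1 - γ • P)⁻¹.mulVec VarP‖)
    ∧ ∀ (v : Fin n → ℝ), (∀ i, 0 ≤ v i) → ∀ i,
        (1 - γ • P)⁻¹.mulVec (fun j => Real.sqrt (v j)) i
          ≤ (1 / Real.sqrt (1 - γ)) * Real.sqrt ((1 - γ • P)⁻¹.mulVec v i) := by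
  have hγ' : (0:ℝ) < 1 - γ := by linarith
  set A : Matrix (Fin n) (Fin n) ℝ := γ • P with hAdef
  have hA0 : ∀ i j, 0 ≤ A i j := fun i j => by
    simpa [hAdef, smul_eq_mul] using mul_nonneg hγ0.le (hP0 i j)
  -- norm bound
  have hPnorm : ‖P‖ ≤ 1 := by
    rw [Matrix.linfty_opNorm_def]
    have : ∀ i : Fin n, (∑ j, ‖P i j‖₊) = 1 := by
      intro i
      have : ((∑ j, ‖P i j‖₊ : NNReal) : ℝ) = 1 := by
        push_cast
        rw [← hP1 i]
        exact Finset.sum_congr rfl fun j _ => Real.norm_of_nonneg (hP0 i j)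
      exact_mod_cast this
    have h1 : (Finset.univ.sup fun i : Fin n => ∑ j, ‖P i j‖₊) ≤ 1 :=
      Finset.sup_le fun i _ => le_of_eq (this i)
    exact_mod_cast h1
  have hnorm : ‖A‖ < 1 := by
    have : ‖A‖ = |γ| * ‖P‖ := by rw [hAdef, norm_smul, Real.norm_eq_abs]
    rw [this, abs_of_pos hγ0]
    calc γ * ‖P‖ ≤ γ * 1 := by nlinarith
      _ < 1 := by linarith
  have hUnit : IsUnit (1 - A) := isUnit_one_sub_of_norm_lt_one hnorm
  have hUdet : IsUnit (1 - A).det := (Matrix.isUnit_iff_isUnit_det _).mp hUnit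
  set W : Matrix (Fin n) (Fin n) ℝ := (1 - A)⁻¹ with hWdef
  have hHasSum : HasSum (fun k : ℕ => A ^ k) W := by
    rw [hWdef, Matrix.nonsing_inv_eq_ringInverse]
    exact hasSum_geom_series_inverse A hnorm
  -- nonnegativity of powers
  have hpow : ∀ (k : ℕ) (i j : Fin n), 0 ≤ (A ^ k) i j := by
    intro k
    induction k with
    | zero =>
      intro i j
      rw [pow_zero, Matrix.one_apply]
      split <;> norm_num
    | succ k ih =>
      intro i j
      rw [pow_succ, Matrix.mul_apply]
      exact Finset.sum_nonneg fun l _ => mul_nonneg (ih i l) (hA0 l j)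
  have hW0 : ∀ i j, 0 ≤ W i j := by
    intro i j
    have h1 : HasSum (fun k : ℕ => (A ^ k) i) (W i) := Pi.hasSum.mp hHasSum i
    have h2 : HasSum (fun k : ℕ => (A ^ k) i j) (W i j) := Pi.hasSum.mp h1 j
    exact h2.nonneg fun k => hpow k i j
  -- row sums of W
  have hWrow : ∀ i, ∑ j, W i j = (1 - γ)⁻¹ := by
    have hone : (1 - A) *ᵥ (fun _ => (1:ℝ)) = fun _ => (1 - γ) := by
      funext i
      simp only [Matrix.mulVec, dotProduct, Matrix.sub_apply, Matrix.one_apply, hAdef,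
        Matrix.smul_apply, smul_eq_mul, mul_one, Finset.sum_sub_distrib, Finset.sum_ite_eq,
        ← Finset.mul_sum, hP1 i]
      simp [hP1 i]
    have hWone : W *ᵥ (fun _ => (1 - γ : ℝ)) = fun _ => (1:ℝ) := by
      calc W *ᵥ (fun _ => (1 - γ : ℝ)) = W *ᵥ ((1 - A) *ᵥ fun _ => (1:ℝ)) := by rw [hone]
        _ = (W * (1 - A)) *ᵥ (fun _ => (1:ℝ)) := by rw [Matrix.mulVec_mulVec]
        _ = fun _ => (1:ℝ) := by
            rw [hWdef, Matrix.nonsing_inv_mul _ hUdet]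
            funext i; simp [Matrix.one_mulVec]
    intro i
    have := congrFun hWone i
    simp only [Matrix.mulVec, dotProduct] at this
    have hsum : (∑ j, W i j) * (1 - γ) = 1 := by
      rw [Finset.sum_mul]
      simpa [mul_comm] using this
    field_simp at hsum ⊢
    linarith [hsum]
  -- Jensen step
  have key : ∀ (v : Fin n → ℝ), (∀ i, 0 ≤ v i) → ∀ i,
      W.mulVec (fun j => Real.sqrt (v j)) i
        ≤ (1 / Real.sqrt (1 - γ)) * Real.sqrt (W.mulVec v i) := by
    intro v hv i
    have hcs := Real.sum_sqrt_mul_sqrt_le (Finset.univ : Finset (Fin n))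
      (f := fun j => W i j) (g := fun j => W i j * v j)
      (fun j => hW0 i j) (fun j => mul_nonneg (hW0 i j) (hv j))
    have hterm : ∀ j, W i j * Real.sqrt (v j)
        = Real.sqrt (W i j) * Real.sqrt (W i j * v j) := by
      intro j
      rw [Real.sqrt_mul (hW0 i j), ← mul_assoc, Real.mul_self_sqrt (hW0 i j)]
    have hL : W.mulVec (fun j => Real.sqrt (v j)) i
        = ∑ j, Real.sqrt (W i j) * Real.sqrt (W i j * v j) := by
      simp only [Matrix.mulVec, dotProduct]
      exact Finset.sum_congr rfl fun j _ => hterm j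
    have hR : W.mulVec v i = ∑ j, W i j * v j := rfl
    rw [hL, hR]
    calc ∑ j, Real.sqrt (W i j) * Real.sqrt (W i j * v j)
        ≤ Real.sqrt (∑ j, W i j) * Real.sqrt (∑ j, W i j * v j) := hcs
      _ = (1 / Real.sqrt (1 - γ)) * Real.sqrt (∑ j, W i j * v j) := by
          rw [hWrow i, Real.sqrt_inv, one_div]
  refine ⟨?_, key⟩
  -- norm part
  have hC : (0:ℝ) ≤ 1 / Real.sqrt (1 - γ) := by positivity
  have hRHS : (0:ℝ) ≤ (1 / Real.sqrt (1 - γ)) * Real.sqrt ‖W.mulVec VarP‖ := by positivity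
  rw [pi_norm_le_iff_of_nonneg hRHS]
  intro i
  have hxi : 0 ≤ W.mulVec (fun j => Real.sqrt (VarP j)) i := by
    rw [show W.mulVec (fun j => Real.sqrt (VarP j)) i
        = ∑ j, W i j * Real.sqrt (VarP j) from rfl]
    exact Finset.sum_nonneg fun j _ => mul_nonneg (hW0 i j) (Real.sqrt_nonneg _)
  rw [Real.norm_of_nonneg hxi]
  calc W.mulVec (fun j => Real.sqrt (VarP j)) i
      ≤ (1 / Real.sqrt (1 - γ)) * Real.sqrt (W.mulVec VarP i) := key VarP hVarNonneg i
    _ ≤ (1 / Real.sqrt (1 - γ)) * Real.sqrt ‖W.mulVec VarP‖ := by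
        apply mul_le_mul_of_nonneg_left _ hC
        apply Real.sqrt_le_sqrt
        exact (le_abs_self _).trans (norm_le_pi_norm (W.mulVec VarP) i)
end
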